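/- (Converse bound R_Z ≥ 2) In the secure aggregation with an oblivious server model, assuming the correctness constraint and the server security constraint (user security is not needed), the key of user 1 satisfies H(Z_1 | X_1, Y_1) ≥ 2L, and hence H(Z_1) ≥ 2L; by symmetry of the model, H(Z_k) ≥ 2L for every user k, so L_Z ≥ 2L and R_Z = L_Z/L ≥ 2. -/

import Mathlib

open Classical
open scoped BigOperators

/-- Probability of the event `E` under the probability mass function `p`
on a finite sample space `Ω`. -/
noncomputable def pr {Ω : Type*} [Fintype Ω] (p : Ω → ℝ) (E : Ω → Prop) : ℝ :=
  ∑ ω, if E ω then p ω else 0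

/-- Shannon entropy of the random variable `X` in base-`q` units. -/
noncomputable def ent {Ω α : Type*} [Fintype Ω] [Fintype α] (q : ℕ) (p : Ω → ℝ)
    (X : Ω → α) : ℝ :=
  -∑ a, pr p (fun ω => X ω = a) * Real.logb q (pr p (fun ω => X ω = a))

/-- Conditional entropy `H(X | Y) = H(X, Y) − H(Y)`, base `q`. -/
noncomputable def condEnt {Ω α β : Type*} [Fintype Ω] [Fintype α] [Fintype β]
    (q : ℕ) (p : Ω → ℝ) (X : Ω → α) (Y : Ω → β) : ℝ :=
  ent q p (fun ω => (X ω, Y ω)) - ent q p Y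

/-- Mutual information `I(X ; Y) = H(X) + H(Y) − H(X, Y)`, base `q`. -/
noncomputable def mutInf {Ω α β : Type*} [Fintype Ω] [Fintype α] [Fintype β]
    (q : ℕ) (p : Ω → ℝ) (X : Ω → α) (Y : Ω → β) : ℝ :=
  ent q p X + ent q p Y - ent q p (fun ω => (X ω, Y ω))

/-- Conditional mutual information
`I(X ; Y | Z) = H(X, Z) + H(Y, Z) − H(X, Y, Z) − H(Z)`, base `q`. -/
noncomputable def condMutInf {Ω α β γ : Type*} [Fintype Ω] [Fintype α] [Fintype β] [Fintype γ]
    (q : ℕ) (p : Ω → ℝ) (X : Ω → α) (Y : Ω → β) (Z : Ω → γ) : ℝ :=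
  ent q p (fun ω => (X ω, Z ω)) + ent q p (fun ω => (Y ω, Z ω))
    - ent q p (fun ω => (X ω, Y ω, Z ω)) - ent q p Z

namespace CvAux

variable {Ω : Type*} [Fintype Ω] {p : Ω → ℝ}

lemma pr_nonneg (hp0 : ∀ ω, 0 ≤ p ω) (E : Ω → Prop) : 0 ≤ pr p E :=
  Finset.sum_nonneg fun ω _ => by split <;> simp [hp0 ω]

lemma pr_congr {E E' : Ω → Prop} (h : ∀ ω, p ω ≠ 0 → (E ω ↔ E' ω)) : pr p E = pr p E' := by
  refine Finset.sum_congr rfl fun ω _ => ?_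
  by_cases hpω : p ω = 0
  · split <;> split <;> simp [hpω]
  · rw [if_congr (h ω hpω) rfl rfl]

lemma pr_mono (hp0 : ∀ ω, 0 ≤ p ω) {E E' : Ω → Prop} (h : ∀ ω, E ω → E' ω) :
    pr p E ≤ pr p E' := by
  refine Finset.sum_le_sum fun ω _ => ?_
  by_cases hE : E ω
  · simp [hE, h ω hE]
  · simp only [hE, if_false]; split <;> simp [hp0 ω]

lemma pr_false : pr p (fun _ => False) = 0 := by simp [pr]

lemma pr_pos_elim (h : pr p E ≠ 0) : ∃ ω, E ω ∧ p ω ≠ 0 := by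
  by_contra hc
  push_neg at hc
  apply h
  refine Finset.sum_eq_zero fun ω _ => ?_
  by_cases hE : E ω
  · simp [hE, hc ω hE]
  · simp [hE]

lemma pr_ne_zero_of (hp0 : ∀ ω, 0 ≤ p ω) {E : Ω → Prop} (ω : Ω) (hE : E ω) (hω : p ω ≠ 0) :
    pr p E ≠ 0 := by
  have h1 : 0 < p ω := lt_of_le_of_ne (hp0 ω) (Ne.symm hω)
  have : p ω ≤ pr p E := by
    have := Finset.single_le_sum (f := fun ω => if E ω then p ω else 0)
      (fun i _ => by by_cases h : E i <;> simp [h, hp0 i]) (Finset.mem_univ ω)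
    have h' : p ω ≤ ∑ x, if E x then p x else 0 := by simpa [hE] using this
    exact h'
  exact ne_of_gt (lt_of_lt_of_le h1 this)

lemma sum_pr {α : Type*} [Fintype α] (hp1 : (∑ ω, p ω) = 1) (A : Ω → α) :
    ∑ a, pr p (fun ω => A ω = a) = 1 := by
  rw [← hp1]
  unfold pr
  rw [Finset.sum_comm]
  refine Finset.sum_congr rfl fun ω _ => ?_
  simp

lemma pr_marg {α : Type*} [Fintype α] (A : Ω → α) (E : Ω → Prop) :
    pr p E = ∑ a, pr p (fun ω => E ω ∧ A ω = a) := by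
  unfold pr
  rw [Finset.sum_comm]
  refine Finset.sum_congr rfl fun ω _ => ?_
  by_cases hE : E ω <;> simp [hE]

lemma pr_le_one (hp0 : ∀ ω, 0 ≤ p ω) (hp1 : (∑ ω, p ω) = 1) (E : Ω → Prop) :
    pr p E ≤ 1 := by
  rw [← hp1]
  refine Finset.sum_le_sum fun ω _ => ?_
  split <;> simp [hp0 ω]

/-- entropy in natural log units -/
noncomputable def entL {Ω α : Type*} [Fintype Ω] [Fintype α] (p : Ω → ℝ) (A : Ω → α) : ℝ :=
  -∑ a, pr p (fun ω => A ω = a) * Real.log (pr p (fun ω => A ω = a))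

lemma ent_eq_entL {α : Type*} [Fintype α] (q : ℕ) (A : Ω → α) :
    ent q p A = entL p A / Real.log q := by
  unfold ent entL Real.logb
  rw [neg_div, Finset.sum_div]
  congr 1
  exact Finset.sum_congr rfl fun a _ => by ring


lemma pr_eq_of_ae {α : Type*} [Fintype α] {A B : Ω → α} (h : ∀ ω, p ω ≠ 0 → A ω = B ω)
    (a : α) : pr p (fun ω => A ω = a) = pr p (fun ω => B ω = a) :=
  pr_congr fun ω hω => by rw [h ω hω]

lemma entL_congr {α : Type*} [Fintype α] {A B : Ω → α} (h : ∀ ω, p ω ≠ 0 → A ω = B ω) :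
    entL p A = entL p B := by
  unfold entL
  congr 1
  exact Finset.sum_congr rfl fun a _ => by rw [pr_eq_of_ae h a]

lemma entL_comp_inj {α β : Type*} [Fintype α] [Fintype β] (A : Ω → α) (g : α → β)
    (hg : Function.Injective g) : entL p (fun ω => g (A ω)) = entL p A := by
  unfold entL
  congr 1
  have h0 : ∀ b : β, b ∉ Finset.image g Finset.univ →
      pr p (fun ω => g (A ω) = b) = 0 := by
    intro b hb
    refine Finset.sum_eq_zero fun ω _ => ?_
    have : ¬ (g (A ω) = b) := fun hc => hb (by simp [← hc])
    simp [this]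
  rw [← Finset.sum_subset (Finset.subset_univ (Finset.image g Finset.univ))
      (fun b _ hb => by rw [h0 b hb]; simp)]
  rw [Finset.sum_image (fun a _ a' _ h => hg h)]
  refine Finset.sum_congr rfl fun a _ => ?_
  have : pr p (fun ω => g (A ω) = g a) = pr p (fun ω => A ω = a) :=
    pr_congr fun ω _ => ⟨fun h => hg h, fun h => by rw [h]⟩
  rw [this]

lemma pr_pair_eq {α β : Type*} {A : Ω → α} {B : Ω → β} (a : α) (b : β) :
    pr p (fun ω => (A ω, B ω) = (a, b)) = pr p (fun ω => A ω = a ∧ B ω = b) :=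
  pr_congr fun ω _ => by simp [Prod.ext_iff]

lemma gibbs {ι : Type*} [Fintype ι] (f g : ι → ℝ) (hf : ∀ i, 0 ≤ f i) (hg : ∀ i, 0 ≤ g i)
    (hfg : ∀ i, f i ≠ 0 → g i ≠ 0) (hsum : ∑ i, g i ≤ ∑ i, f i) :
    ∑ i, f i * Real.log (g i) ≤ ∑ i, f i * Real.log (f i) := by
  have key : ∀ i, f i * Real.log (g i) - f i * Real.log (f i) ≤ g i - f i := by
    intro i
    rcases eq_or_lt_of_le (hf i) with h | h
    · simp [← h]; exact hg i
    · have hgi : 0 < g i := lt_of_le_of_ne (hg i) (Ne.symm (hfg i (ne_of_gt h)))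
      have hlog : Real.log (g i / f i) ≤ g i / f i - 1 :=
        Real.log_le_sub_one_of_pos (div_pos hgi h)
      have := mul_le_mul_of_nonneg_left hlog (le_of_lt h)
      rw [Real.log_div (ne_of_gt hgi) (ne_of_gt h)] at this
      calc f i * Real.log (g i) - f i * Real.log (f i)
          = f i * (Real.log (g i) - Real.log (f i)) := by ring
        _ ≤ f i * (g i / f i - 1) := this
        _ = g i - f i := by field_simp
  have h1 : ∑ i, (f i * Real.log (g i) - f i * Real.log (f i)) ≤ ∑ i, (g i - f i) :=
    Finset.sum_le_sum fun i _ => key i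
  rw [Finset.sum_sub_distrib, Finset.sum_sub_distrib] at h1
  linarith


section pairs
variable {α β : Type*} [Fintype α] [Fintype β]

/-- H(B) ≤ H(A,B) -/
lemma entL_snd_le_pair (hp0 : ∀ ω, 0 ≤ p ω) (A : Ω → α) (B : Ω → β) :
    entL p B ≤ entL p (fun ω => (A ω, B ω)) := by
  unfold entL
  rw [neg_le_neg_iff]
  have hm : ∀ b, pr p (fun ω => B ω = b) = ∑ a, pr p (fun ω => A ω = a ∧ B ω = b) := by
    intro b
    rw [pr_marg A (fun ω => B ω = b)]
    exact Finset.sum_congr rfl fun a _ => pr_congr (fun ω _ => and_comm)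
  have h1 : ∑ c : α × β, pr p (fun ω => (A ω, B ω) = c) * Real.log (pr p (fun ω => (A ω, B ω) = c))
      = ∑ a, ∑ b, pr p (fun ω => A ω = a ∧ B ω = b) * Real.log (pr p (fun ω => A ω = a ∧ B ω = b)) := by
    rw [Fintype.sum_prod_type]
    exact Finset.sum_congr rfl fun a _ => Finset.sum_congr rfl fun b _ => by rw [pr_pair_eq]
  rw [h1]
  have h2 : ∀ a b, pr p (fun ω => A ω = a ∧ B ω = b) * Real.log (pr p (fun ω => A ω = a ∧ B ω = b))
      ≤ pr p (fun ω => A ω = a ∧ B ω = b) * Real.log (pr p (fun ω => B ω = b)) := by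
    intro a b
    by_cases h0 : pr p (fun ω => A ω = a ∧ B ω = b) = 0
    · simp [h0]
    · have hpos : 0 < pr p (fun ω => A ω = a ∧ B ω = b) :=
        lt_of_le_of_ne (pr_nonneg hp0 _) (Ne.symm h0)
      exact mul_le_mul_of_nonneg_left
        (Real.log_le_log hpos (pr_mono hp0 fun ω h => h.2)) (le_of_lt hpos)
  calc ∑ a, ∑ b, pr p (fun ω => A ω = a ∧ B ω = b) * Real.log (pr p (fun ω => A ω = a ∧ B ω = b))
      ≤ ∑ a, ∑ b, pr p (fun ω => A ω = a ∧ B ω = b) * Real.log (pr p (fun ω => B ω = b)) :=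
        Finset.sum_le_sum fun a _ => Finset.sum_le_sum fun b _ => h2 a b
    _ = ∑ b, pr p (fun ω => B ω = b) * Real.log (pr p (fun ω => B ω = b)) := by
        rw [Finset.sum_comm]
        refine Finset.sum_congr rfl fun b _ => ?_
        rw [← Finset.sum_mul, ← hm b]

/-- subadditivity: H(A,B) ≤ H(A) + H(B) -/
lemma entL_pair_le (hp0 : ∀ ω, 0 ≤ p ω) (hp1 : (∑ ω, p ω) = 1) (A : Ω → α) (B : Ω → β) :
    entL p (fun ω => (A ω, B ω)) ≤ entL p A + entL p B := by
  have key := gibbs (ι := α × β)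
    (fun x => pr p (fun ω => A ω = x.1 ∧ B ω = x.2))
    (fun x => pr p (fun ω => A ω = x.1) * pr p (fun ω => B ω = x.2))
    (fun x => pr_nonneg hp0 _)
    (fun x => mul_nonneg (pr_nonneg hp0 _) (pr_nonneg hp0 _))
    (fun x hx => mul_ne_zero
      (fun h => hx (le_antisymm (le_of_le_of_eq (pr_mono hp0 fun ω hh => hh.1) h) (pr_nonneg hp0 _)))
      (fun h => hx (le_antisymm (le_of_le_of_eq (pr_mono hp0 fun ω hh => hh.2) h) (pr_nonneg hp0 _))))
    (by
      show (∑ x : α × β, pr p (fun ω => A ω = x.1) * pr p (fun ω => B ω = x.2))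
          ≤ ∑ x : α × β, pr p (fun ω => A ω = x.1 ∧ B ω = x.2)
      refine le_of_eq ?_
      rw [Fintype.sum_prod_type]
      dsimp only
      calc (∑ a, ∑ b, pr p (fun ω => A ω = a) * pr p (fun ω => B ω = b))
          = (∑ a, pr p (fun ω => A ω = a)) * (∑ b, pr p (fun ω => B ω = b)) := by
            rw [Finset.sum_mul]
            exact Finset.sum_congr rfl fun a _ => by rw [Finset.mul_sum]
        _ = 1 := by rw [sum_pr hp1, sum_pr hp1, one_mul]
        _ = ∑ x : α × β, pr p (fun ω => A ω = x.1 ∧ B ω = x.2) := by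
            rw [Fintype.sum_prod_type]
            dsimp only
            rw [← sum_pr hp1 A]
            exact Finset.sum_congr rfl fun a _ => (pr_marg B (fun ω => A ω = a)))
  -- now convert
  unfold entL
  have e1 : ∑ x : α × β, pr p (fun ω => (A ω, B ω) = x) * Real.log (pr p (fun ω => (A ω, B ω) = x))
      = ∑ x : α × β, pr p (fun ω => A ω = x.1 ∧ B ω = x.2) * Real.log (pr p (fun ω => A ω = x.1 ∧ B ω = x.2)) := by
    refine Finset.sum_congr rfl fun x _ => ?_
    rw [show pr p (fun ω => (A ω, B ω) = x) = pr p (fun ω => A ω = x.1 ∧ B ω = x.2) from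
      pr_congr fun ω _ => by simp [Prod.ext_iff]]
  have e2 : ∑ x : α × β, pr p (fun ω => A ω = x.1 ∧ B ω = x.2) *
        Real.log (pr p (fun ω => A ω = x.1) * pr p (fun ω => B ω = x.2))
      = (∑ a, pr p (fun ω => A ω = a) * Real.log (pr p (fun ω => A ω = a)))
        + (∑ b, pr p (fun ω => B ω = b) * Real.log (pr p (fun ω => B ω = b))) := by
    have split : ∀ x : α × β, pr p (fun ω => A ω = x.1 ∧ B ω = x.2) *
        Real.log (pr p (fun ω => A ω = x.1) * pr p (fun ω => B ω = x.2))
        = pr p (fun ω => A ω = x.1 ∧ B ω = x.2) * Real.log (pr p (fun ω => A ω = x.1))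
          + pr p (fun ω => A ω = x.1 ∧ B ω = x.2) * Real.log (pr p (fun ω => B ω = x.2)) := by
      intro x
      by_cases h0 : pr p (fun ω => A ω = x.1 ∧ B ω = x.2) = 0
      · simp [h0]
      · have hA : pr p (fun ω => A ω = x.1) ≠ 0 :=
          fun h => h0 (le_antisymm (le_of_le_of_eq (pr_mono hp0 fun ω hh => hh.1) h) (pr_nonneg hp0 _))
        have hB : pr p (fun ω => B ω = x.2) ≠ 0 :=
          fun h => h0 (le_antisymm (le_of_le_of_eq (pr_mono hp0 fun ω hh => hh.2) h) (pr_nonneg hp0 _))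
        rw [Real.log_mul hA hB]; ring
    rw [Finset.sum_congr rfl fun x _ => split x, Finset.sum_add_distrib]
    congr 1
    · rw [Fintype.sum_prod_type]
      refine Finset.sum_congr rfl fun a _ => ?_
      dsimp only
      rw [← Finset.sum_mul, ← pr_marg B (fun ω => A ω = a)]
    · rw [Fintype.sum_prod_type, Finset.sum_comm]
      refine Finset.sum_congr rfl fun b _ => ?_
      dsimp only
      rw [← Finset.sum_mul]
      congr 1
      rw [pr_marg A (fun ω => B ω = b)]
      exact Finset.sum_congr rfl fun a _ => pr_congr fun ω _ => and_comm
  rw [e1] at *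
  linarith [key, e2 ▸ key]


lemma entL_pair_sum (A : Ω → α) (B : Ω → β) :
    entL p (fun ω => (A ω, B ω)) = -∑ a, ∑ b,
      pr p (fun ω => A ω = a ∧ B ω = b) * Real.log (pr p (fun ω => A ω = a ∧ B ω = b)) := by
  unfold entL
  rw [Fintype.sum_prod_type]
  congr 1
  refine Finset.sum_congr rfl fun a _ => Finset.sum_congr rfl fun b _ => ?_
  dsimp only
  rw [show pr p (fun ω => (A ω, B ω) = (a, b)) = pr p (fun ω => A ω = a ∧ B ω = b) from
    pr_congr fun ω _ => by simp [Prod.ext_iff]]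


/-- maximum entropy -/
lemma entL_le_log_card (hp0 : ∀ ω, 0 ≤ p ω) (hp1 : (∑ ω, p ω) = 1) (A : Ω → α)
    [Nonempty α] : entL p A ≤ Real.log (Fintype.card α) := by
  have hcard : (0:ℝ) < (Fintype.card α : ℝ) := by
    have := Fintype.card_pos (α := α); positivity
  have key := gibbs (ι := α) (fun a => pr p (fun ω => A ω = a))
    (fun _ => ((Fintype.card α : ℝ))⁻¹)
    (fun a => pr_nonneg hp0 _) (fun _ => by positivity)
    (fun a _ => by positivity)
    (by rw [sum_pr hp1 A, Finset.sum_const, nsmul_eq_mul, Finset.card_univ, mul_inv_cancel₀ (ne_of_gt hcard)])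
  have h2 : ∑ a, pr p (fun ω => A ω = a) * Real.log ((Fintype.card α : ℝ))⁻¹
      = - Real.log (Fintype.card α) := by
    rw [← Finset.sum_mul, sum_pr hp1 A, one_mul, Real.log_inv]
  unfold entL
  rw [h2] at key
  linarith

lemma entL_uniform (A : Ω → α)
    (h : ∀ a, pr p (fun ω => A ω = a) = ((Fintype.card α : ℝ))⁻¹) [Nonempty α] :
    entL p A = Real.log (Fintype.card α) := by
  have hcard : (0:ℝ) < (Fintype.card α : ℝ) := by
    have := Fintype.card_pos (α := α); positivity
  unfold entL
  simp only [h, Finset.sum_const, nsmul_eq_mul, Real.log_inv, Finset.card_univ]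
  field_simp

/-- zero conditional entropy gives a.s. functional dependence -/
lemma exists_fun_of_entL_pair_eq [Nonempty α] (hp0 : ∀ ω, 0 ≤ p ω)
    (A : Ω → α) (B : Ω → β)
    (h : entL p (fun ω => (A ω, B ω)) = entL p B) :
    ∃ f : β → α, ∀ ω, p ω ≠ 0 → A ω = f (B ω) := by
  have hm : ∀ b, pr p (fun ω => B ω = b) = ∑ a, pr p (fun ω => A ω = a ∧ B ω = b) := by
    intro b
    rw [pr_marg A (fun ω => B ω = b)]
    exact Finset.sum_congr rfl fun a _ => pr_congr (fun ω _ => and_comm)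
  have hle : ∀ a b, pr p (fun ω => A ω = a ∧ B ω = b) ≤ pr p (fun ω => B ω = b) :=
    fun a b => pr_mono hp0 fun ω hh => hh.2
  have hTnn : ∀ x : α × β, 0 ≤ pr p (fun ω => A ω = x.1 ∧ B ω = x.2) *
      Real.log (pr p (fun ω => B ω = x.2)) - pr p (fun ω => A ω = x.1 ∧ B ω = x.2) *
      Real.log (pr p (fun ω => A ω = x.1 ∧ B ω = x.2)) := by
    intro x
    by_cases h0 : pr p (fun ω => A ω = x.1 ∧ B ω = x.2) = 0
    · simp [h0]
    · have hpos : 0 < pr p (fun ω => A ω = x.1 ∧ B ω = x.2) :=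
        lt_of_le_of_ne (pr_nonneg hp0 _) (Ne.symm h0)
      have := mul_le_mul_of_nonneg_left (Real.log_le_log hpos (hle x.1 x.2)) (le_of_lt hpos)
      linarith
  have hsumT : ∑ x : α × β, (pr p (fun ω => A ω = x.1 ∧ B ω = x.2) *
      Real.log (pr p (fun ω => B ω = x.2)) - pr p (fun ω => A ω = x.1 ∧ B ω = x.2) *
      Real.log (pr p (fun ω => A ω = x.1 ∧ B ω = x.2))) = 0 := by
    rw [Finset.sum_sub_distrib]
    have e1 : ∑ x : α × β, pr p (fun ω => A ω = x.1 ∧ B ω = x.2) *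
        Real.log (pr p (fun ω => B ω = x.2)) =
        ∑ b, pr p (fun ω => B ω = b) * Real.log (pr p (fun ω => B ω = b)) := by
      rw [Fintype.sum_prod_type, Finset.sum_comm]
      refine Finset.sum_congr rfl fun b _ => ?_
      dsimp only
      rw [← Finset.sum_mul, ← hm b]
    have e2 : ∑ x : α × β, pr p (fun ω => A ω = x.1 ∧ B ω = x.2) *
        Real.log (pr p (fun ω => A ω = x.1 ∧ B ω = x.2)) =
        ∑ b, pr p (fun ω => B ω = b) * Real.log (pr p (fun ω => B ω = b)) := by
      have := entL_pair_sum (p := p) A B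
      unfold entL at h this
      rw [this] at h
      have h' := neg_injective h
      rw [Fintype.sum_prod_type]
      rw [h']
    rw [e1, e2, sub_self]
  have hT0 : ∀ x : α × β, pr p (fun ω => A ω = x.1 ∧ B ω = x.2) *
      Real.log (pr p (fun ω => B ω = x.2)) - pr p (fun ω => A ω = x.1 ∧ B ω = x.2) *
      Real.log (pr p (fun ω => A ω = x.1 ∧ B ω = x.2)) = 0 := by
    intro x
    have := (Finset.sum_eq_zero_iff_of_nonneg (fun x _ => hTnn x)).mp hsumT
    exact this x (Finset.mem_univ x)
  have key : ∀ a b, pr p (fun ω => A ω = a ∧ B ω = b) ≠ 0 →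
      pr p (fun ω => A ω = a ∧ B ω = b) = pr p (fun ω => B ω = b) := by
    intro a b h0
    have hpos : 0 < pr p (fun ω => A ω = a ∧ B ω = b) :=
      lt_of_le_of_ne (pr_nonneg hp0 _) (Ne.symm h0)
    have hBpos : 0 < pr p (fun ω => B ω = b) := lt_of_lt_of_le hpos (hle a b)
    have := hT0 (a, b)
    dsimp only at this
    have hlog : Real.log (pr p (fun ω => B ω = b)) =
        Real.log (pr p (fun ω => A ω = a ∧ B ω = b)) := by
      have hfac : pr p (fun ω => A ω = a ∧ B ω = b) *
          (Real.log (pr p (fun ω => B ω = b)) -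
            Real.log (pr p (fun ω => A ω = a ∧ B ω = b))) = 0 := by ring_nf; linarith [this]
      rcases mul_eq_zero.mp hfac with hc | hc
      · exact absurd hc h0
      · linarith [hc]
    calc pr p (fun ω => A ω = a ∧ B ω = b)
        = Real.exp (Real.log (pr p (fun ω => A ω = a ∧ B ω = b))) := (Real.exp_log hpos).symm
      _ = Real.exp (Real.log (pr p (fun ω => B ω = b))) := by rw [hlog]
      _ = pr p (fun ω => B ω = b) := Real.exp_log hBpos
  refine ⟨fun b => if hb : ∃ a, pr p (fun ω => A ω = a ∧ B ω = b) ≠ 0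
    then hb.choose else Classical.arbitrary α, fun ω hω => ?_⟩
  have hω' : pr p (fun ω' => A ω' = A ω ∧ B ω' = B ω) ≠ 0 :=
    pr_ne_zero_of hp0 ω ⟨rfl, rfl⟩ hω
  have hb : ∃ a, pr p (fun ω' => A ω' = a ∧ B ω' = B ω) ≠ 0 := ⟨A ω, hω'⟩
  dsimp only
  rw [dif_pos hb]
  have hch := hb.choose_spec
  by_contra hne
  have h1 : pr p (fun ω' => A ω' = A ω ∧ B ω' = B ω) = pr p (fun ω' => B ω' = B ω) :=
    key _ _ hω'
  have h2 : pr p (fun ω' => A ω' = hb.choose ∧ B ω' = B ω) = pr p (fun ω' => B ω' = B ω) :=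
    key _ _ hch
  have hBpos : 0 < pr p (fun ω' => B ω' = B ω) :=
    lt_of_lt_of_le (lt_of_le_of_ne (pr_nonneg hp0 _) (Ne.symm hω')) (hle (A ω) (B ω))
  have hsub : ({A ω, hb.choose} : Finset α) ⊆ Finset.univ := Finset.subset_univ _
  have hpair : ∑ a ∈ ({A ω, hb.choose} : Finset α),
      pr p (fun ω' => A ω' = a ∧ B ω' = B ω) ≤ pr p (fun ω' => B ω' = B ω) := by
    rw [hm (B ω)]
    exact Finset.sum_le_sum_of_subset_of_nonneg hsub (fun a _ _ => pr_nonneg hp0 _)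
  rw [Finset.sum_pair hne] at hpair
  rw [h1, h2] at hpair
  linarith


/-- H((f∘A), A) = H(A) -/
lemma entL_dup (f : α → β) (A : Ω → α) :
    entL p (fun ω => (f (A ω), A ω)) = entL p A :=
  entL_comp_inj A (fun a => (f a, a)) (fun a a' h => congrArg Prod.snd h)

/-- H(A, f∘A) = H(A) -/
lemma entL_dup' (f : α → β) (A : Ω → α) :
    entL p (fun ω => (A ω, f (A ω))) = entL p A :=
  entL_comp_inj A (fun a => (a, f a)) (fun a a' h => congrArg Prod.fst h)

/-- insert a function of the second component in the middle -/
lemma entL_ins_mid {γ : Type*} [Fintype γ] (f : β → γ) (A : Ω → α) (B : Ω → β) :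
    entL p (fun ω => (A ω, (f (B ω), B ω))) = entL p (fun ω => (A ω, B ω)) :=
  entL_comp_inj (fun ω => (A ω, B ω)) (fun t => (t.1, (f t.2, t.2)))
    (fun t t' h => by
      have h1 := congrArg Prod.fst h
      have h2 := congrArg (fun u => u.2.2) h
      simp only at h1 h2
      exact Prod.ext h1 h2)

/-- insert a function of the first component in the middle -/
lemma entL_ins_mid' {γ : Type*} [Fintype γ] (f : α → γ) (A : Ω → α) (B : Ω → β) :
    entL p (fun ω => (A ω, (f (A ω), B ω))) = entL p (fun ω => (A ω, B ω)) :=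
  entL_comp_inj (fun ω => (A ω, B ω)) (fun t => (t.1, (f t.1, t.2)))
    (fun t t' h => by
      have h1 := congrArg Prod.fst h
      have h2 := congrArg (fun u => u.2.2) h
      simp only at h1 h2
      exact Prod.ext h1 h2)

/-- swap the first two components of a triple -/
lemma entL_swap12 {γ : Type*} [Fintype γ] (A : Ω → α) (B : Ω → β) (C : Ω → γ) :
    entL p (fun ω => (A ω, (B ω, C ω))) = entL p (fun ω => (B ω, (A ω, C ω))) :=
  by exact entL_comp_inj (p := p) (fun ω => (B ω, (A ω, C ω))) (fun t => (t.2.1, (t.1, t.2.2)))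
       (fun t t' h => by
         obtain ⟨b, a, c⟩ := t
         obtain ⟨b', a', c'⟩ := t'
         simp only [Prod.mk.injEq] at h ⊢
         tauto)

/-- a.s. determined first component collapses -/
lemma entL_det (hp0 : ∀ ω, 0 ≤ p ω) (f : β → α) (A : Ω → α) (B : Ω → β)
    (h : ∀ ω, p ω ≠ 0 → A ω = f (B ω)) :
    entL p (fun ω => (A ω, B ω)) = entL p B := by
  have e1 : entL p (fun ω => (A ω, B ω)) = entL p (fun ω => (f (B ω), B ω)) :=
    entL_congr fun ω hω => by rw [h ω hω]
  rw [e1, entL_dup]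

lemma ssa_abstract {γ : Type*} [Fintype γ]
    (P3 : α → β → γ → ℝ) (PAB : α → β → ℝ) (PBC : β → γ → ℝ) (PB : β → ℝ)
    (h3 : ∀ a b c, 0 ≤ P3 a b c)
    (hm1 : ∀ a b, ∑ c, P3 a b c = PAB a b)
    (hm2 : ∀ b c, ∑ a, P3 a b c = PBC b c)
    (hm3 : ∀ b, ∑ a, PAB a b = PB b)
    (hm4 : ∀ b, ∑ c, PBC b c = PB b) :
    (∑ a, ∑ b, PAB a b * Real.log (PAB a b)) + (∑ b, ∑ c, PBC b c * Real.log (PBC b c))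
      - (∑ b, PB b * Real.log (PB b))
    ≤ ∑ a, ∑ b, ∑ c, P3 a b c * Real.log (P3 a b c) := by
  have hAB0 : ∀ a b, 0 ≤ PAB a b := fun a b => by
    rw [← hm1]; exact Finset.sum_nonneg fun c _ => h3 a b c
  have hBC0 : ∀ b c, 0 ≤ PBC b c := fun b c => by
    rw [← hm2]; exact Finset.sum_nonneg fun a _ => h3 a b c
  have hB0 : ∀ b, 0 ≤ PB b := fun b => by
    rw [← hm3]; exact Finset.sum_nonneg fun a _ => hAB0 a b
  have h3AB : ∀ a b c, P3 a b c ≤ PAB a b := fun a b c => by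
    rw [← hm1]
    exact Finset.single_le_sum (fun c _ => h3 a b c) (Finset.mem_univ c)
  have h3BC : ∀ a b c, P3 a b c ≤ PBC b c := fun a b c => by
    rw [← hm2]
    exact Finset.single_le_sum (fun a _ => h3 a b c) (Finset.mem_univ a)
  have hABB : ∀ a b, PAB a b ≤ PB b := fun a b => by
    rw [← hm3]
    exact Finset.single_le_sum (fun a _ => hAB0 a b) (Finset.mem_univ a)
  set g : α × β × γ → ℝ := fun x => PAB x.1 x.2.1 / PB x.2.1 * PBC x.2.1 x.2.2 with hg
  set f : α × β × γ → ℝ := fun x => P3 x.1 x.2.1 x.2.2 with hf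
  have hfg : ∀ x, f x ≠ 0 → g x ≠ 0 := by
    intro x hx
    have h3pos : 0 < P3 x.1 x.2.1 x.2.2 := lt_of_le_of_ne (h3 _ _ _) (Ne.symm hx)
    have hABpos : 0 < PAB x.1 x.2.1 := lt_of_lt_of_le h3pos (h3AB _ _ _)
    have hBCpos : 0 < PBC x.2.1 x.2.2 := lt_of_lt_of_le h3pos (h3BC _ _ _)
    have hBpos : 0 < PB x.2.1 := lt_of_lt_of_le hABpos (hABB _ _)
    have : 0 < g x := by
      rw [hg]; exact mul_pos (div_pos hABpos hBpos) hBCpos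
    exact ne_of_gt this
  have hsumf : ∑ x : α × β × γ, f x = ∑ b, PB b := by
    rw [Fintype.sum_prod_type]
    simp only [Fintype.sum_prod_type, hf]
    rw [Finset.sum_comm]
    refine Finset.sum_congr rfl fun b _ => ?_
    rw [← hm3 b]
    exact Finset.sum_congr rfl fun a _ => hm1 a b
  have hsumg : ∑ x : α × β × γ, g x = ∑ b, PB b := by
    rw [Fintype.sum_prod_type]
    simp only [Fintype.sum_prod_type, hg]
    rw [Finset.sum_comm]
    refine Finset.sum_congr rfl fun b _ => ?_
    by_cases hPB : PB b = 0
    · have hA0 : ∀ a, PAB a b = 0 := by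
        intro a
        have := hm3 b
        rw [hPB] at this
        exact (Finset.sum_eq_zero_iff_of_nonneg (fun a _ => hAB0 a b)).mp this a
          (Finset.mem_univ a)
      rw [hPB]
      refine Finset.sum_eq_zero fun a _ => Finset.sum_eq_zero fun c _ => ?_
      rw [hA0 a, zero_div, zero_mul]
    · have : ∀ a, ∑ c, PAB a b / PB b * PBC b c = PAB a b / PB b * PB b := by
        intro a; rw [← Finset.mul_sum, hm4 b]
      rw [Finset.sum_congr rfl fun a _ => this a]
      have : ∀ a, PAB a b / PB b * PB b = PAB a b := fun a => div_mul_cancel₀ _ hPB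
      rw [Finset.sum_congr rfl fun a _ => this a, hm3 b]
  have key := gibbs f g (fun x => h3 _ _ _)
    (fun x => mul_nonneg (div_nonneg (hAB0 _ _) (hB0 _)) (hBC0 _ _))
    hfg (le_of_eq (hsumg.trans hsumf.symm))
  -- expand LHS of key
  have hexp : ∑ x : α × β × γ, f x * Real.log (g x)
      = (∑ a, ∑ b, PAB a b * Real.log (PAB a b))
        + (∑ b, ∑ c, PBC b c * Real.log (PBC b c))
        - (∑ b, PB b * Real.log (PB b)) := by
    have hterm : ∀ x : α × β × γ, f x * Real.log (g x)
        = f x * Real.log (PAB x.1 x.2.1) + f x * Real.log (PBC x.2.1 x.2.2)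
          - f x * Real.log (PB x.2.1) := by
      intro x
      by_cases hx : f x = 0
      · rw [hx]; ring
      · have h3pos : 0 < P3 x.1 x.2.1 x.2.2 := lt_of_le_of_ne (h3 _ _ _) (Ne.symm hx)
        have hABpos : 0 < PAB x.1 x.2.1 := lt_of_lt_of_le h3pos (h3AB _ _ _)
        have hBCpos : 0 < PBC x.2.1 x.2.2 := lt_of_lt_of_le h3pos (h3BC _ _ _)
        have hBpos : 0 < PB x.2.1 := lt_of_lt_of_le hABpos (hABB _ _)
        rw [hg]
        dsimp only
        rw [Real.log_mul (by positivity) (ne_of_gt hBCpos),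
          Real.log_div (ne_of_gt hABpos) (ne_of_gt hBpos)]
        ring
    rw [Finset.sum_congr rfl fun x _ => hterm x]
    rw [Finset.sum_sub_distrib, Finset.sum_add_distrib]
    congr 1
    congr 1
    · -- AB part
      rw [Fintype.sum_prod_type]
      simp only [Fintype.sum_prod_type, hf]
      refine Finset.sum_congr rfl fun a _ => Finset.sum_congr rfl fun b _ => ?_
      rw [← Finset.sum_mul, hm1 a b]
    · -- BC part
      rw [Fintype.sum_prod_type]
      simp only [Fintype.sum_prod_type, hf]
      rw [Finset.sum_comm]
      refine Finset.sum_congr rfl fun b _ => ?_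
      rw [Finset.sum_comm]
      refine Finset.sum_congr rfl fun c _ => ?_
      rw [← Finset.sum_mul, hm2 b c]
    · -- B part
      rw [Fintype.sum_prod_type]
      simp only [Fintype.sum_prod_type, hf]
      rw [Finset.sum_comm]
      refine Finset.sum_congr rfl fun b _ => ?_
      have : ∀ a, ∑ c, P3 a b c * Real.log (PB b) = PAB a b * Real.log (PB b) := by
        intro a; rw [← Finset.sum_mul, hm1 a b]
      rw [Finset.sum_congr rfl fun a _ => this a, ← Finset.sum_mul, hm3 b]
  rw [hexp] at key
  calc (∑ a, ∑ b, PAB a b * Real.log (PAB a b)) + (∑ b, ∑ c, PBC b c * Real.log (PBC b c))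
      - (∑ b, PB b * Real.log (PB b)) ≤ ∑ x : α × β × γ, f x * Real.log (f x) := key
    _ = ∑ a, ∑ b, ∑ c, P3 a b c * Real.log (P3 a b c) := by
        rw [Fintype.sum_prod_type]
        simp only [Fintype.sum_prod_type, hf]

/-- strong subadditivity: H(A,B,C) + H(B) ≤ H(A,B) + H(B,C) -/
lemma entL_ssa {γ : Type*} [Fintype γ] (hp0 : ∀ ω, 0 ≤ p ω)
    (A : Ω → α) (B : Ω → β) (C : Ω → γ) :
    entL p (fun ω => (A ω, B ω, C ω)) + entL p B
      ≤ entL p (fun ω => (A ω, B ω)) + entL p (fun ω => (B ω, C ω)) := by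
  have habs := ssa_abstract
    (fun a b c => pr p (fun ω => A ω = a ∧ B ω = b ∧ C ω = c))
    (fun a b => pr p (fun ω => A ω = a ∧ B ω = b))
    (fun b c => pr p (fun ω => B ω = b ∧ C ω = c))
    (fun b => pr p (fun ω => B ω = b))
    (fun a b c => pr_nonneg hp0 _)
    (fun a b => by
      rw [pr_marg C (fun ω => A ω = a ∧ B ω = b)]
      exact Finset.sum_congr rfl fun c _ => pr_congr fun ω _ => by tauto)
    (fun b c => by
      rw [pr_marg A (fun ω => B ω = b ∧ C ω = c)]
      exact Finset.sum_congr rfl fun a _ => pr_congr fun ω _ => by tauto)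
    (fun b => by
      rw [pr_marg A (fun ω => B ω = b)]
      exact Finset.sum_congr rfl fun a _ => pr_congr fun ω _ => by tauto)
    (fun b => by
      rw [pr_marg C (fun ω => B ω = b)])
  have hABC : entL p (fun ω => (A ω, B ω, C ω)) = -∑ a, ∑ b, ∑ c,
      pr p (fun ω => A ω = a ∧ B ω = b ∧ C ω = c) *
        Real.log (pr p (fun ω => A ω = a ∧ B ω = b ∧ C ω = c)) := by
    unfold entL
    rw [Fintype.sum_prod_type]
    simp only [Fintype.sum_prod_type]
    congr 1
    refine Finset.sum_congr rfl fun a _ => Finset.sum_congr rfl fun b _ =>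
      Finset.sum_congr rfl fun c _ => ?_
    rw [show pr p (fun ω => (A ω, B ω, C ω) = (a, b, c)) =
        pr p (fun ω => A ω = a ∧ B ω = b ∧ C ω = c) from
      pr_congr fun ω _ => by simp [Prod.ext_iff]]
  have hAB := entL_pair_sum (p := p) A B
  have hBC := entL_pair_sum (p := p) B C
  have hB : entL p B = -∑ b, pr p (fun ω => B ω = b) * Real.log (pr p (fun ω => B ω = b)) :=
    rfl
  rw [hABC, hAB, hBC, hB]
  linarith

end pairs
end CvAux

open CvAux

/-- **Converse bound `R_Z ≥ 2`.** Assuming correctness and server security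
(user security not needed), `H(Z_1 | X_1, Y_1) ≥ 2L`, hence `H(Z_1) ≥ 2L`;
by symmetry `H(Z_k) ≥ 2L` for every `k`, so `L_Z ≥ 2L` and `R_Z = L_Z / L ≥ 2`. -/
theorem converse_RZ
    (F : Type) [Field F] [Fintype F]
    (K L LX LY LZ : ℕ) (hK : 2 ≤ K) (hL : 1 ≤ L)
    (Ω : Type) [Fintype Ω] (p : Ω → ℝ)
    (hp0 : ∀ ω, 0 ≤ p ω) (hp1 : (∑ ω, p ω) = 1)
    (W : Fin K → Ω → Fin L → F)
    (Z : Fin K → Ω → Fin LZ → F)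
    (X : Fin K → Ω → Fin LX → F)
    (Y : Fin K → Ω → Fin LY → F)
    -- inputs i.i.d. uniform on F^L and independent of the keys
    (hWZ : ∀ (w : Fin K → Fin L → F) (z : Fin K → Fin LZ → F),
      pr p (fun ω => (∀ k, W k ω = w k) ∧ (∀ k, Z k ω = z k))
        = (1 / (Fintype.card F : ℝ) ^ L) ^ K * pr p (fun ω => ∀ k, Z k ω = z k))
    -- deterministic encoders X_k = φ_k(W_k, Z_k)
    (hX : ∀ k, ∃ φ : (Fin L → F) → (Fin LZ → F) → Fin LX → F,
      ∀ ω, X k ω = φ (W k ω) (Z k ω))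
    -- deterministic server maps Y_k = ψ_k(X_1, …, X_K)
    (hY : ∀ k, ∃ ψ : (Fin K → Fin LX → F) → Fin LY → F, ∀ ω, Y k ω = ψ (fun u => X u ω))
    -- correctness: H(Σ_u W_u | Y_k, W_k, Z_k) = 0
    (hCorr : ∀ k, condEnt (Fintype.card F) p (fun ω => ∑ u, W u ω)
        (fun ω => (Y k ω, W k ω, Z k ω)) = 0)
    -- server security: I(W_1, …, W_K ; X_1, …, X_K) = 0
    (hSec : mutInf (Fintype.card F) p (fun ω => fun k => W k ω)
        (fun ω => fun k => X k ω) = 0) :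
    2 * (L : ℝ) ≤ condEnt (Fintype.card F) p (Z ⟨0, by omega⟩)
        (fun ω => (X ⟨0, by omega⟩ ω, Y ⟨0, by omega⟩ ω)) ∧
    2 * (L : ℝ) ≤ ent (Fintype.card F) p (Z ⟨0, by omega⟩) ∧
    (∀ k : Fin K, 2 * (L : ℝ) ≤ ent (Fintype.card F) p (Z k)) ∧
    2 * L ≤ LZ ∧ 2 ≤ (LZ : ℝ) / (L : ℝ) := by
  have hqgt : 1 < Fintype.card F := Fintype.one_lt_card
  have hlogq : 0 < Real.log (Fintype.card F) := Real.log_pos (by exact_mod_cast hqgt)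
  -- uniform marginal of the full input vector
  have hprWW : ∀ w : Fin K → Fin L → F,
      pr p (fun ω => ∀ k, W k ω = w k) = (1 / (Fintype.card F : ℝ) ^ L) ^ K := by
    intro w
    rw [pr_marg (fun ω => fun k => Z k ω) (fun ω => ∀ k, W k ω = w k)]
    have h1 : ∀ z : Fin K → Fin LZ → F,
        pr p (fun ω => (∀ k, W k ω = w k) ∧ (fun k => Z k ω) = z)
          = (1 / (Fintype.card F : ℝ) ^ L) ^ K * pr p (fun ω => ∀ k, Z k ω = z k) := by
      intro z
      rw [← hWZ w z]
      exact pr_congr fun ω _ => by simp [funext_iff]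
    rw [Finset.sum_congr rfl fun z _ => h1 z, ← Finset.mul_sum]
    have h2 : ∑ z : Fin K → Fin LZ → F, pr p (fun ω => ∀ k, Z k ω = z k) = 1 := by
      rw [show (∑ z : Fin K → Fin LZ → F, pr p (fun ω => ∀ k, Z k ω = z k))
          = ∑ z : Fin K → Fin LZ → F, pr p (fun ω => (fun k => Z k ω) = z) from
        Finset.sum_congr rfl fun z _ => pr_congr fun ω _ => by simp [funext_iff]]
      exact sum_pr hp1 _
    rw [h2, mul_one]
  -- the main entropy bound, for any pair of distinct users
  have main : ∀ k₀ k₁ : Fin K, k₀ ≠ k₁ →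
      2 * (L : ℝ) * Real.log (Fintype.card F) ≤
        entL p (fun ω => (Z k₀ ω, (X k₀ ω, Y k₀ ω)))
          - entL p (fun ω => (X k₀ ω, Y k₀ ω)) := by
    intro k₀ k₁ hk
    -- encoders and server maps
    obtain ⟨ψ, hψ⟩ := hY k₀
    obtain ⟨ψ₁, hψ₁⟩ := hY k₁
    have hφ : ∀ k, ∀ ω, X k ω = (hX k).choose (W k ω) (Z k ω) := fun k => (hX k).choose_spec
    set φ : Fin K → (Fin L → F) → (Fin LZ → F) → Fin LX → F := fun k => (hX k).choose with hφdef
    -- decoding functions from correctness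
    have hdec : ∀ k : Fin K, ∃ f : (Fin LY → F) × (Fin L → F) × (Fin LZ → F) → (Fin L → F),
        ∀ ω, p ω ≠ 0 → (∑ u, W u ω) = f (Y k ω, W k ω, Z k ω) := by
      intro k
      have h0 := hCorr k
      unfold condEnt at h0
      have h1 : ent (Fintype.card F) p
          (fun ω => ((∑ u, W u ω), (Y k ω, W k ω, Z k ω)))
          = ent (Fintype.card F) p (fun ω => (Y k ω, W k ω, Z k ω)) := by linarith
      rw [ent_eq_entL, ent_eq_entL] at h1
      have hlq : Real.log (Fintype.card F) ≠ 0 := ne_of_gt hlogq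
      have h2 : entL p (fun ω => ((∑ u, W u ω), (Y k ω, W k ω, Z k ω)))
          = entL p (fun ω => (Y k ω, W k ω, Z k ω)) := by
        have := congrArg (· * Real.log (Fintype.card F)) h1
        simpa [div_mul_cancel₀, hlq] using this
      exact exists_fun_of_entL_pair_eq hp0 _ _ h2
    obtain ⟨fdec, hfdec⟩ := hdec k₀
    obtain ⟨fdec₁, hfdec₁⟩ := hdec k₁
    -- positivity of joint support
    have hNpos : (0:ℝ) < (1 / (Fintype.card F : ℝ) ^ L) ^ K := by
      have : (0:ℝ) < (Fintype.card F : ℝ) := by positivity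
      positivity
    have hsupp : ∀ (w : Fin K → Fin L → F) (z : Fin K → Fin LZ → F),
        pr p (fun ω => ∀ k, Z k ω = z k) ≠ 0 →
        pr p (fun ω => (∀ k, W k ω = w k) ∧ (∀ k, Z k ω = z k)) ≠ 0 := by
      intro w z hz
      rw [hWZ w z]
      exact mul_ne_zero (ne_of_gt hNpos) hz
    -- value-level correctness at user k₁
    have hval : ∀ (w : Fin K → Fin L → F) (z : Fin K → Fin LZ → F),
        pr p (fun ω => ∀ k, Z k ω = z k) ≠ 0 →
        (∑ u, w u) = fdec₁ (ψ₁ (fun u => φ u (w u) (z u)), w k₁, z k₁) := by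
      intro w z hz
      obtain ⟨ω, ⟨hw, hzz⟩, hpω⟩ := pr_pos_elim (hsupp w z hz)
      have h1 := hfdec₁ ω hpω
      have hXω : (fun u => X u ω) = fun u => φ u (w u) (z u) := by
        funext u
        rw [hφ u ω, hw u, hzz u]
      have hsum : (∑ u, W u ω) = ∑ u, w u := Finset.sum_congr rfl fun u _ => hw u
      rw [hsum, hψ₁ ω, hXω, hw k₁, hzz k₁] at h1
      exact h1
    -- injectivity of the encoder of user k₀ on the key support
    have hinj : ∀ ζ : Fin LZ → F, pr p (fun ω => Z k₀ ω = ζ) ≠ 0 →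
        ∀ v v' : Fin L → F, φ k₀ v ζ = φ k₀ v' ζ → v = v' := by
      intro ζ hζ v v' he
      obtain ⟨ω, hωζ, hpω⟩ := pr_pos_elim hζ
      have hz : pr p (fun ω' => ∀ k, Z k ω' = (fun k => Z k ω) k) ≠ 0 :=
        pr_ne_zero_of hp0 ω (fun k => rfl) hpω
      have h1 := hval (fun u => if u = k₀ then v else 0) (fun k => Z k ω) hz
      have h2 := hval (fun u => if u = k₀ then v' else 0) (fun k => Z k ω) hz
      have hXeq : (fun u => φ u (if u = k₀ then v else 0) (Z u ω))
          = fun u => φ u (if u = k₀ then v' else 0) (Z u ω) := by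
        funext u
        by_cases hu : u = k₀
        · subst hu
          rw [if_pos rfl, if_pos rfl, hωζ]
          exact he
        · rw [if_neg hu, if_neg hu]
      have hk₁ : k₁ ≠ k₀ := fun hc => hk hc.symm
      rw [hXeq] at h1
      have h3 : (∑ u, if u = k₀ then v else 0) = (∑ u, if u = k₀ then v' else 0) := by
        rw [h1, h2]
        simp [if_neg hk₁]
      simpa using h3
    -- a.s. recovery of W k₀ from (X k₀, Z k₀)
    have hgex : ∃ g : (Fin LX → F) × (Fin LZ → F) → (Fin L → F),
        ∀ ω, p ω ≠ 0 → W k₀ ω = g (X k₀ ω, Z k₀ ω) := by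
      refine ⟨fun xz => if h : ∃ v, φ k₀ v xz.2 = xz.1 then h.choose else 0, fun ω hpω => ?_⟩
      have hζ : pr p (fun ω' => Z k₀ ω' = Z k₀ ω) ≠ 0 := pr_ne_zero_of hp0 ω rfl hpω
      have hx : φ k₀ (W k₀ ω) (Z k₀ ω) = X k₀ ω := (hφ k₀ ω).symm
      have hex : ∃ v, φ k₀ v (Z k₀ ω) = X k₀ ω := ⟨_, hx⟩
      dsimp only
      rw [dif_pos hex]
      exact hinj (Z k₀ ω) hζ _ _ (hx.trans hex.choose_spec.symm)
    obtain ⟨g, hg⟩ := hgex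
    -- a.s. Vv is a function of (Z k₀, (X k₀, Y k₀))
    have hFn : ∀ ω, p ω ≠ 0 → (W k₀ ω, ∑ u, W u ω) =
        (fun zc : (Fin LZ → F) × ((Fin LX → F) × (Fin LY → F)) =>
          (g (zc.2.1, zc.1), fdec (zc.2.2, g (zc.2.1, zc.1), zc.1)))
        (Z k₀ ω, (X k₀ ω, Y k₀ ω)) := by
      intro ω hpω
      dsimp only
      rw [← hg ω hpω, ← hfdec ω hpω]
    -- Step 1 : H(Z,C) = H(V, (Z,C))
    have S1 : entL p (fun ω => ((W k₀ ω, ∑ u, W u ω), (Z k₀ ω, (X k₀ ω, Y k₀ ω))))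
        = entL p (fun ω => (Z k₀ ω, (X k₀ ω, Y k₀ ω))) :=
      entL_det hp0 (fun zc : (Fin LZ → F) × ((Fin LX → F) × (Fin LY → F)) =>
        (g (zc.2.1, zc.1), fdec (zc.2.2, g (zc.2.1, zc.1), zc.1))) _ _ hFn
    -- Step 2 : reshuffle and drop Z
    have S2a : entL p (fun ω => ((W k₀ ω, ∑ u, W u ω), (Z k₀ ω, (X k₀ ω, Y k₀ ω))))
        = entL p (fun ω => (Z k₀ ω, ((W k₀ ω, ∑ u, W u ω), (X k₀ ω, Y k₀ ω)))) :=
      entL_swap12 _ _ _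
    have S2b : entL p (fun ω => ((W k₀ ω, ∑ u, W u ω), (X k₀ ω, Y k₀ ω)))
        ≤ entL p (fun ω => (Z k₀ ω, ((W k₀ ω, ∑ u, W u ω), (X k₀ ω, Y k₀ ω)))) :=
      entL_snd_le_pair hp0 _ _
    -- Step 3 : strong subadditivity to pass from conditioning on C to conditioning on X
    have hCfun : ∀ ω, p ω ≠ 0 → (X k₀ ω, Y k₀ ω) =
        (fun x : Fin K → Fin LX → F => (x k₀, ψ x)) (fun u => X u ω) := by
      intro ω _
      dsimp only
      rw [hψ ω]
    have c1 : entL p (fun ω => ((W k₀ ω, ∑ u, W u ω), ((X k₀ ω, Y k₀ ω), fun u => X u ω)))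
        = entL p (fun ω => ((W k₀ ω, ∑ u, W u ω), fun u => X u ω)) := by
      have e : entL p (fun ω => ((W k₀ ω, ∑ u, W u ω), ((X k₀ ω, Y k₀ ω), fun u => X u ω)))
          = entL p (fun ω => ((W k₀ ω, ∑ u, W u ω),
              ((fun x : Fin K → Fin LX → F => (x k₀, ψ x)) (fun u => X u ω), fun u => X u ω))) :=
        entL_congr fun ω hω => by rw [hCfun ω hω]
      rw [e]
      exact entL_ins_mid (fun x : Fin K → Fin LX → F => (x k₀, ψ x))
        (fun ω => (W k₀ ω, ∑ u, W u ω)) (fun ω => fun u => X u ω)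
    have c2 : entL p (fun ω => ((X k₀ ω, Y k₀ ω), fun u => X u ω))
        = entL p (fun ω => fun u => X u ω) := by
      have e : entL p (fun ω => ((X k₀ ω, Y k₀ ω), fun u => X u ω))
          = entL p (fun ω =>
              ((fun x : Fin K → Fin LX → F => (x k₀, ψ x)) (fun u => X u ω), fun u => X u ω)) :=
        entL_congr fun ω hω => by rw [hCfun ω hω]
      rw [e]
      exact entL_dup (fun x : Fin K → Fin LX → F => (x k₀, ψ x)) (fun ω => fun u => X u ω)
    have S3 : entL p (fun ω => ((W k₀ ω, ∑ u, W u ω), fun u => X u ω))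
          + entL p (fun ω => (X k₀ ω, Y k₀ ω))
        ≤ entL p (fun ω => ((W k₀ ω, ∑ u, W u ω), (X k₀ ω, Y k₀ ω)))
          + entL p (fun ω => fun u => X u ω) := by
      have hssa := entL_ssa hp0 (fun ω => (W k₀ ω, ∑ u, W u ω))
        (fun ω => (X k₀ ω, Y k₀ ω)) (fun ω => fun u => X u ω)
      rw [c1, c2] at hssa
      linarith
    -- Step 4 : security gives H(V, X) ≥ H(V) + H(X)
    have c3 : entL p (fun ω => ((fun k => W k ω), ((W k₀ ω, ∑ u, W u ω), fun u => X u ω)))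
        = entL p (fun ω => ((fun k => W k ω), fun u => X u ω)) := by
      exact entL_ins_mid' (fun w : Fin K → Fin L → F => (w k₀, ∑ u, w u))
        (fun ω => fun k => W k ω) (fun ω => fun u => X u ω)
    have c4 : entL p (fun ω => ((fun k => W k ω), (W k₀ ω, ∑ u, W u ω)))
        = entL p (fun ω => fun k => W k ω) := by
      exact entL_dup' (fun w : Fin K → Fin L → F => (w k₀, ∑ u, w u))
        (fun ω => fun k => W k ω)
    have hSecL : entL p (fun ω => ((fun k => W k ω), fun u => X u ω))
        = entL p (fun ω => fun k => W k ω) + entL p (fun ω => fun u => X u ω) := by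
      have h0 := hSec
      unfold mutInf at h0
      have h1 : ent (Fintype.card F) p (fun ω => ((fun k => W k ω), fun u => X u ω))
          = ent (Fintype.card F) p (fun ω => fun k => W k ω)
            + ent (Fintype.card F) p (fun ω => fun u => X u ω) := by linarith
      rw [ent_eq_entL, ent_eq_entL, ent_eq_entL] at h1
      have hlq : Real.log (Fintype.card F) ≠ 0 := ne_of_gt hlogq
      have := congrArg (· * Real.log (Fintype.card F)) h1
      simp only [div_mul_cancel₀ _ hlq, add_mul] at this
      exact this
    have S4 : entL p (fun ω => fun u => X u ω) + entL p (fun ω => (W k₀ ω, ∑ u, W u ω))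
        ≤ entL p (fun ω => ((W k₀ ω, ∑ u, W u ω), fun u => X u ω)) := by
      have hssa := entL_ssa hp0 (fun ω => fun k => W k ω)
        (fun ω => (W k₀ ω, ∑ u, W u ω)) (fun ω => fun u => X u ω)
      rw [c3, c4] at hssa
      linarith [hSecL]
    -- Step 5 : H(V) = 2 L log q
    have hVcount : ∀ a b : Fin L → F, pr p (fun ω => (W k₀ ω, ∑ u, W u ω) = (a, b))
        = ∑ w : Fin K → Fin L → F,
          (if (w k₀ = a ∧ ∑ u, w u = b) then (1 / (Fintype.card F : ℝ) ^ L) ^ K else 0) := by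
      intro a b
      rw [pr_marg (fun ω => fun k => W k ω) (fun ω => (W k₀ ω, ∑ u, W u ω) = (a, b))]
      refine Finset.sum_congr rfl fun w _ => ?_
      by_cases hc : (w k₀ = a ∧ ∑ u, w u = b)
      · rw [if_pos hc, ← hprWW w]
        refine pr_congr fun ω _ => ?_
        constructor
        · rintro ⟨h1, h2⟩ k
          exact congrFun h2 k
        · intro h
          have hsum : (∑ u, W u ω) = ∑ u, w u := Finset.sum_congr rfl fun u _ => h u
          refine ⟨?_, funext h⟩
          rw [Prod.mk.injEq]
          exact ⟨by rw [h k₀, hc.1], by rw [hsum, hc.2]⟩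
      · rw [if_neg hc]
        have hnot : ∀ ω, ¬ ((W k₀ ω, ∑ u, W u ω) = (a, b) ∧ (fun k => W k ω) = w) := by
          rintro ω ⟨h1, h2⟩
          apply hc
          have hW : ∀ k, W k ω = w k := fun k => congrFun h2 k
          rw [Prod.mk.injEq] at h1
          refine ⟨by rw [← hW k₀, h1.1], ?_⟩
          rw [show (∑ u, w u) = ∑ u, W u ω from
            Finset.sum_congr rfl fun u _ => (hW u).symm, h1.2]
        rw [show pr p (fun ω => (W k₀ ω, ∑ u, W u ω) = (a, b) ∧ (fun k => W k ω) = w)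
            = pr p (fun _ => False) from
          pr_congr fun ω _ => iff_of_false (hnot ω) not_false, pr_false]
    have htrans : ∀ a b a' b' : Fin L → F,
        (∑ w : Fin K → Fin L → F,
          (if (w k₀ = a ∧ ∑ u, w u = b) then (1 / (Fintype.card F : ℝ) ^ L) ^ K else 0))
        = ∑ w : Fin K → Fin L → F,
          (if (w k₀ = a' ∧ ∑ u, w u = b') then (1 / (Fintype.card F : ℝ) ^ L) ^ K else 0) := by
      intro a b a' b'
      set δ : Fin K → Fin L → F := fun u =>
        (if u = k₀ then a' - a else 0) + (if u = k₁ then (b' - b) - (a' - a) else 0) with hδ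
      have hδk₀ : δ k₀ = a' - a := by
        rw [hδ]
        simp [hk]
      have hδsum : (∑ u, δ u) = b' - b := by
        rw [hδ, Finset.sum_add_distrib,
          Finset.sum_ite_eq' Finset.univ k₀ (fun _ => a' - a),
          Finset.sum_ite_eq' Finset.univ k₁ (fun _ => (b' - b) - (a' - a))]
        simp only [Finset.mem_univ, if_true]
        abel
      refine Fintype.sum_equiv (Equiv.addRight δ) _ _ fun w => ?_
      have h1 : (Equiv.addRight δ w) k₀ = w k₀ + (a' - a) := by
        simp [Equiv.addRight, hδk₀]
      have h2 : (∑ u, (Equiv.addRight δ w) u) = (∑ u, w u) + (b' - b) := by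
        have : ∀ u, (Equiv.addRight δ w) u = w u + δ u := fun u => rfl
        rw [Finset.sum_congr rfl fun u _ => this u, Finset.sum_add_distrib, hδsum]
      refine (if_congr ?_ rfl rfl).symm
      rw [h1, h2]
      constructor
      · rintro ⟨u1, u2⟩
        constructor
        · have := eq_sub_of_add_eq u1
          rw [this]
          abel
        · have := eq_sub_of_add_eq u2
          rw [this]
          abel
      · rintro ⟨u1, u2⟩
        rw [u1, u2]
        constructor
        · abel
        · abel
    have huni : ∀ x y : (Fin L → F) × (Fin L → F),
        pr p (fun ω => (W k₀ ω, ∑ u, W u ω) = x) = pr p (fun ω => (W k₀ ω, ∑ u, W u ω) = y) := by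
      intro x y
      obtain ⟨a, b⟩ := x
      obtain ⟨a', b'⟩ := y
      rw [hVcount a b, hVcount a' b', htrans a b a' b']
    have hcardpos : (0:ℝ) < (Fintype.card ((Fin L → F) × (Fin L → F)) : ℝ) := by
      have := Fintype.card_pos (α := (Fin L → F) × (Fin L → F))
      positivity
    have hprV : ∀ x : (Fin L → F) × (Fin L → F),
        pr p (fun ω => (W k₀ ω, ∑ u, W u ω) = x)
          = ((Fintype.card ((Fin L → F) × (Fin L → F)) : ℝ))⁻¹ := by
      intro x
      have h1 : ∑ y : (Fin L → F) × (Fin L → F),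
          pr p (fun ω => (W k₀ ω, ∑ u, W u ω) = y) = 1 := sum_pr hp1 _
      have h2 : ∑ y : (Fin L → F) × (Fin L → F),
          pr p (fun ω => (W k₀ ω, ∑ u, W u ω) = y)
          = (Fintype.card ((Fin L → F) × (Fin L → F)) : ℝ)
            * pr p (fun ω => (W k₀ ω, ∑ u, W u ω) = x) := by
        rw [Finset.sum_congr rfl fun y _ => huni y x, Finset.sum_const, nsmul_eq_mul,
          Finset.card_univ]
      rw [h2] at h1
      rw [show ((Fintype.card ((Fin L → F) × (Fin L → F)) : ℝ))⁻¹
          = 1 / (Fintype.card ((Fin L → F) × (Fin L → F)) : ℝ) from (one_div _).symm,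
        eq_div_iff (ne_of_gt hcardpos)]
      linarith
    have hVent : entL p (fun ω => (W k₀ ω, ∑ u, W u ω))
        = Real.log (Fintype.card ((Fin L → F) × (Fin L → F))) :=
      entL_uniform _ hprV
    have hlogV : Real.log ((Fintype.card ((Fin L → F) × (Fin L → F)) : ℝ))
        = 2 * (L:ℝ) * Real.log (Fintype.card F) := by
      have hcF : (0:ℝ) < (Fintype.card F : ℝ) := by
        have := Fintype.card_pos (α := F)
        positivity
      rw [Fintype.card_prod, Fintype.card_fun, Fintype.card_fin]
      push_cast
      rw [Real.log_mul (by positivity) (by positivity), Real.log_pow]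
      push_cast
      ring
    -- assemble
    rw [← S1, S2a]
    have := S2b
    have := S3
    have := S4
    rw [hVent, hlogV] at S4
    linarith

  -- from entL bound to condEnt bound
  have hcond : ∀ k₀ k₁ : Fin K, k₀ ≠ k₁ →
      2 * (L:ℝ) ≤ condEnt (Fintype.card F) p (Z k₀) (fun ω => (X k₀ ω, Y k₀ ω)) := by
    intro k₀ k₁ hkk
    have hm := main k₀ k₁ hkk
    unfold condEnt
    rw [ent_eq_entL, ent_eq_entL, ← sub_div, le_div_iff₀ hlogq]
    linarith
  -- entropy of the key bound
  have hEnt : ∀ k₀ k₁ : Fin K, k₀ ≠ k₁ →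
      2 * (L:ℝ) ≤ ent (Fintype.card F) p (Z k₀) := by
    intro k₀ k₁ hkk
    have h1 := hcond k₀ k₁ hkk
    have h2 : ent (Fintype.card F) p (fun ω => (Z k₀ ω, (X k₀ ω, Y k₀ ω)))
        ≤ ent (Fintype.card F) p (Z k₀)
          + ent (Fintype.card F) p (fun ω => (X k₀ ω, Y k₀ ω)) := by
      have h3 := entL_pair_le hp0 hp1 (Z k₀) (fun ω => (X k₀ ω, Y k₀ ω))
      rw [ent_eq_entL, ent_eq_entL, ent_eq_entL, ← add_div]
      exact (div_le_div_iff_of_pos_right hlogq).mpr h3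
    unfold condEnt at h1
    linarith
  have hent_le : ∀ k : Fin K, ent (Fintype.card F) p (Z k) ≤ (LZ:ℝ) := by
    intro k
    have h1 := entL_le_log_card (α := Fin LZ → F) hp0 hp1 (Z k)
    have h2 : Real.log (Fintype.card (Fin LZ → F)) = (LZ:ℝ) * Real.log (Fintype.card F) := by
      rw [Fintype.card_fun, Fintype.card_fin]
      push_cast
      rw [Real.log_pow]
    rw [ent_eq_entL, div_le_iff₀ hlogq]
    rw [h2] at h1
    linarith
  have hk1 : ∀ k : Fin K, ∃ j : Fin K, k ≠ j := by
    intro k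
    by_cases h : k = ⟨0, by omega⟩
    · exact ⟨⟨1, by omega⟩, by rw [h]; simp [Fin.ext_iff]⟩
    · exact ⟨⟨0, by omega⟩, h⟩
  have hEnt' : ∀ k : Fin K, 2 * (L:ℝ) ≤ ent (Fintype.card F) p (Z k) := by
    intro k
    obtain ⟨j, hj⟩ := hk1 k
    exact hEnt k j hj
  have hLZ : 2 * (L:ℝ) ≤ (LZ:ℝ) :=
    le_trans (hEnt' ⟨0, by omega⟩) (hent_le ⟨0, by omega⟩)
  have hLpos : (0:ℝ) < (L:ℝ) := by
    have : 0 < L := hL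
    exact_mod_cast this
  refine ⟨?_, ?_, hEnt', ?_, ?_⟩
  · exact hcond ⟨0, by omega⟩ ⟨1, by omega⟩ (by simp [Fin.ext_iff])
  · exact hEnt' ⟨0, by omega⟩
  · exact_mod_cast hLZ
  · rw [le_div_iff₀ hLpos]
    linarith
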